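/- Let U be a neighborhood of 0 ∈ ℂ^{2m+1} with the standard contact form θ, f a holomorphic function on U, F ⊂ U the hypersurface f = 0, and v^f the associated vector field. Then v^f is tangent to any Legendrian subvariety Z ⊂ U contained in the hypersurface F. -/

import Mathlib

open Set Function

/-! # Framework: holomorphic Legendrian singularities in charts

Complex manifolds are modelled in charts: a complex manifold germ is an open subset of
`ℂⁿ`, holomorphic = `ℂ`-analytic.  By the Darboux theorem, a contact manifold of
dimension `2m+1` is modelled by a chart `(U, θ)` where `θ` is a holomorphic contact
`1`-form on an open set `U ⊆ ℂ^{2m+1}`, the contact distribution being `D = ker θ`. -/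

/-- The affine space `ℂⁿ`. -/
abbrev Cn (n : ℕ) : Type := Fin n → ℂ

section Generic

variable {F : Type} [NormedAddCommGroup F] [NormedSpace ℂ F]

/-- The Zariski tangent space at `x` of a subset `Z` of a complex normed space:
the common kernel of the differentials at `x` of all germs at `x` of holomorphic
functions vanishing on `Z`. -/
def zTang (Z : Set F) (x : F) : Set F :=
  {v | ∀ (V : Set F) (g : F → ℂ), IsOpen V → x ∈ V → AnalyticOnNhd ℂ g V →
    (∀ z ∈ Z ∩ V, g z = 0) → fderiv ℂ g x v = 0}

/-- `x` is a nonsingular point of the analytic set `Z`, of codimension `c`: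
near `x`, `Z` is the zero set of a holomorphic submersion to `ℂᶜ`. -/
def SmoothPt (c : ℕ) (Z : Set F) (x : F) : Prop :=
  x ∈ Z ∧ ∃ (V : Set F) (g : F → Cn c), IsOpen V ∧ x ∈ V ∧ AnalyticOnNhd ℂ g V ∧
    Z ∩ V = {z | z ∈ V ∧ g z = 0} ∧ Function.Surjective (fderiv ℂ g x)

/-- `x` is a nonsingular point of `Z` (of some codimension). -/
def SmoothPtAny (Z : Set F) (x : F) : Prop := ∃ c, SmoothPt c Z x

/-- `Z` is an analytic subvariety of the open set `U`: locally on `U`, `Z` is the common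
zero set of finitely many holomorphic functions. -/
def IsAnSub (U Z : Set F) : Prop :=
  Z ⊆ U ∧ ∀ x ∈ U, ∃ (V : Set F) (k : ℕ) (g : Fin k → F → ℂ),
    IsOpen V ∧ x ∈ V ∧ V ⊆ U ∧ (∀ i, AnalyticOnNhd ℂ (g i) V) ∧
    Z ∩ V = {z | z ∈ V ∧ ∀ i, g i z = 0}

/-- The exterior derivative of a holomorphic `1`-form evaluated on constant vector
fields: `dθ_x(u,v) = (D_xθ)(u)(v) - (D_xθ)(v)(u)`. -/
noncomputable def exd (θ : F → (F →L[ℂ] ℂ)) (x : F) (u v : F) : ℂ :=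
  fderiv ℂ θ x u v - fderiv ℂ θ x v u

/-- The Lie derivative of a holomorphic `1`-form `θ` along a holomorphic vector field `A`:
`(L_A θ)_x = (D_xθ)(A x) + θ_x ∘ D_xA`. -/
noncomputable def LieD (A : F → F) (θ : F → (F →L[ℂ] ℂ)) (x : F) : F →L[ℂ] ℂ :=
  fderiv ℂ θ x (A x) + (θ x).comp (fderiv ℂ A x)

/-- The germ at `x` of the holomorphic `1`-form `α` lies in `𝒪·dI + I·Ω` where `I` is the
ideal of germs of holomorphic functions vanishing on `Z`; i.e. the restriction `α|_Z`
is zero in the space of Kähler differentials `Ω_{Z,x}`. -/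
def FormVanishesKaehler (Z : Set F) (x : F) (α : F → (F →L[ℂ] ℂ)) : Prop :=
  ∃ V : Set F, IsOpen V ∧ x ∈ V ∧
  ∃ (k l : ℕ) (a g : Fin k → F → ℂ) (c : Fin l → F → ℂ) (ω : Fin l → F → (F →L[ℂ] ℂ)),
    (∀ j, AnalyticOnNhd ℂ (a j) V) ∧ (∀ j, AnalyticOnNhd ℂ (g j) V) ∧
    (∀ j, ∀ z ∈ Z ∩ V, g j z = 0) ∧
    (∀ j, AnalyticOnNhd ℂ (c j) V) ∧ (∀ j, ∀ z ∈ Z ∩ V, c j z = 0) ∧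
    (∀ j, AnalyticOnNhd ℂ (ω j) V) ∧
    ∀ y ∈ V, α y = (∑ j, a j y • fderiv ℂ (g j) y) + (∑ j, c j y • ω j y)

/-- A weakly holomorphic function on `Z`: holomorphic on the nonsingular locus of `Z`
and locally bounded on `Z`. -/
def WeaklyHolo (Z : Set F) (h : F → ℂ) : Prop :=
  (∀ y, SmoothPtAny Z y → ∃ W : Set F, IsOpen W ∧ y ∈ W ∧
    ∃ H : F → ℂ, AnalyticOnNhd ℂ H W ∧ ∀ z ∈ W, SmoothPtAny Z z → h z = H z) ∧
  (∀ x ∈ Z, ∃ W : Set F, IsOpen W ∧ x ∈ W ∧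
    Bornology.IsBounded (h '' {z | z ∈ Z ∩ W ∧ SmoothPtAny Z z}))

/-- `Z` is a normal analytic variety (Oka's criterion: every weakly holomorphic
function germ is holomorphic). -/
def IsNormalSubvariety (Z : Set F) : Prop :=
  ∀ x ∈ Z, ∀ V : Set F, IsOpen V → x ∈ V → ∀ h : F → ℂ, WeaklyHolo (Z ∩ V) h →
    ∃ W : Set F, IsOpen W ∧ x ∈ W ∧ W ⊆ V ∧ ∃ H : F → ℂ, AnalyticOnNhd ℂ H W ∧
      ∀ z ∈ W, SmoothPtAny (Z ∩ V) z → H z = h z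

end Generic

/-! ## Standard coordinates and the standard contact form on `ℂ^{2m+1}` -/

/-- The index `i` (for `1 ≤ i ≤ m`, i.e. the coordinate `x_i`). -/
def lo (m : ℕ) (i : Fin m) : Fin (2*m+1) := ⟨i, by have := i.isLt; omega⟩
/-- The index `m + i` (the coordinate `x_{m+i}`). -/
def hi (m : ℕ) (i : Fin m) : Fin (2*m+1) := ⟨m + i, by have := i.isLt; omega⟩
/-- The last index (the coordinate `x_{2m+1}`). -/
def lst (m : ℕ) : Fin (2*m+1) := ⟨2*m, by omega⟩
def lo2 (m : ℕ) (i : Fin m) : Fin (2*m) := ⟨i, by have := i.isLt; omega⟩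
def hi2 (m : ℕ) (i : Fin m) : Fin (2*m) := ⟨m + i, by have := i.isLt; omega⟩

/-- The standard contact form
`θ = ∑_{i=1}^m (x_{m+i} dx_i − x_i dx_{m+i}) − dx_{2m+1}` on `ℂ^{2m+1}`,
as a holomorphic `1`-form. -/
noncomputable def thC (m : ℕ) (x : Cn (2*m+1)) : Cn (2*m+1) →L[ℂ] ℂ :=
  (∑ i : Fin m,
    (x (hi m i) • (ContinuousLinearMap.proj (lo m i) : Cn (2*m+1) →L[ℂ] ℂ)
      - x (lo m i) • (ContinuousLinearMap.proj (hi m i) : Cn (2*m+1) →L[ℂ] ℂ)))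
  - (ContinuousLinearMap.proj (lst m) : Cn (2*m+1) →L[ℂ] ℂ)

/-- `dθ = 2 ∑_{k=1}^m dx_{m+k} ∧ dx_k` (a constant-coefficient `2`-form). -/
noncomputable def dthC (m : ℕ) (a b : Cn (2*m+1)) : ℂ :=
  2 * ∑ i : Fin m, (a (hi m i) * b (lo m i) - a (lo m i) * b (hi m i))

/-- The standard symplectic form `dθ|_{ℂ^{2m}} = 2 ∑_{k=1}^m dx_{m+k} ∧ dx_k` on the
hyperplane `ℂ^{2m} = {x_{2m+1} = 0}`. -/
noncomputable def omS (m : ℕ) (a b : Cn (2*m)) : ℂ :=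
  2 * ∑ i : Fin m, (a (hi2 m i) * b (lo2 m i) - a (lo2 m i) * b (hi2 m i))

/-- Partial derivative `∂f/∂x_j` at `x`. -/
noncomputable def pd {n : ℕ} (f : Cn n → ℂ) (j : Fin n) (x : Cn n) : ℂ :=
  fderiv ℂ f x (Pi.single j 1)

/-- The contact Hamiltonian vector field `v^f` of a holomorphic function `f` on
`ℂ^{2m+1}` (Theorem 2.2 of the paper):
`2v^f = ∑ (∂f/∂x_{m+k} − (∂f/∂x_{2m+1})x_k) ∂/∂x_k
      + ∑ (−∂f/∂x_k − (∂f/∂x_{2m+1})x_{m+k}) ∂/∂x_{m+k}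
      + (∑ ((∂f/∂x_k)x_k + (∂f/∂x_{m+k})x_{m+k}) − 2f) ∂/∂x_{2m+1}`. -/
noncomputable def vf (m : ℕ) (f : Cn (2*m+1) → ℂ) (x : Cn (2*m+1)) : Cn (2*m+1) :=
  fun j =>
    if h : (j : ℕ) < m then
      (pd f (hi m ⟨j, h⟩) x - pd f (lst m) x * x j) / 2
    else if h2 : (j : ℕ) < 2*m then
      (-(pd f (lo m ⟨(j : ℕ) - m, by omega⟩) x) - pd f (lst m) x * x j) / 2
    else
      ((∑ i : Fin m, (pd f (lo m i) x * x (lo m i) + pd f (hi m i) x * x (hi m i)))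
        - 2 * f x) / 2

/-! ## Contact charts, contactomorphisms, Legendrian subvarieties -/

/-- `(U, θ)` is a chart of a contact manifold of dimension `2m+1`: `U` is open, `θ` is a
holomorphic `1`-form on `U`, and `dθ` is nondegenerate on `D = ker θ` at every point of
`U` (i.e. the Frobenius bracket `∧²D → T/D` is nondegenerate). -/
def IsContactForm (m : ℕ) (U : Set (Cn (2*m+1)))
    (θ : Cn (2*m+1) → (Cn (2*m+1) →L[ℂ] ℂ)) : Prop :=
  IsOpen U ∧ AnalyticOnNhd ℂ θ U ∧
  ∀ x ∈ U, ∀ u : Cn (2*m+1), θ x u = 0 →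
    (∀ v : Cn (2*m+1), θ x v = 0 → exd θ x u v = 0) → u = 0

/-- `φ : V₁ → V₂` is a contactomorphism (with inverse `ψ`) between the contact charts
`(V₁, θ₁)` and `(V₂, θ₂)`: a biholomorphism such that `dφ` maps `ker θ₁` to `ker θ₂`. -/
def IsContactoOn (m : ℕ) (V₁ V₂ : Set (Cn (2*m+1)))
    (θ₁ θ₂ : Cn (2*m+1) → (Cn (2*m+1) →L[ℂ] ℂ))
    (φ ψ : Cn (2*m+1) → Cn (2*m+1)) : Prop :=
  AnalyticOnNhd ℂ φ V₁ ∧ AnalyticOnNhd ℂ ψ V₂ ∧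
  MapsTo φ V₁ V₂ ∧ MapsTo ψ V₂ V₁ ∧
  (∀ x ∈ V₁, ψ (φ x) = x) ∧ (∀ y ∈ V₂, φ (ψ y) = y) ∧
  ∀ x ∈ V₁, ∀ v : Cn (2*m+1), θ₁ x v = 0 ↔ θ₂ (φ x) (fderiv ℂ φ x v) = 0

/-- The two germs `x₁ ∈ Z₁ ⊆ (U₁, θ₁)` and `x₂ ∈ Z₂ ⊆ (U₂, θ₂)` are contactomorphic:
there are open neighbourhoods `Vᵢ ⊆ Uᵢ` of `xᵢ` and a contactomorphism `φ : V₁ → V₂`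
with `φ x₁ = x₂` and `φ(Z₁ ∩ V₁) = Z₂ ∩ V₂`. -/
def GermContacto (m : ℕ)
    (U₁ : Set (Cn (2*m+1))) (θ₁ : Cn (2*m+1) → (Cn (2*m+1) →L[ℂ] ℂ))
    (Z₁ : Set (Cn (2*m+1))) (x₁ : Cn (2*m+1))
    (U₂ : Set (Cn (2*m+1))) (θ₂ : Cn (2*m+1) → (Cn (2*m+1) →L[ℂ] ℂ))
    (Z₂ : Set (Cn (2*m+1))) (x₂ : Cn (2*m+1)) : Prop :=
  ∃ (V₁ V₂ : Set (Cn (2*m+1))) (φ ψ : Cn (2*m+1) → Cn (2*m+1)),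
    IsOpen V₁ ∧ IsOpen V₂ ∧ x₁ ∈ V₁ ∧ x₂ ∈ V₂ ∧ V₁ ⊆ U₁ ∧ V₂ ⊆ U₂ ∧
    IsContactoOn m V₁ V₂ θ₁ θ₂ φ ψ ∧ φ x₁ = x₂ ∧ φ '' (Z₁ ∩ V₁) = Z₂ ∩ V₂

/-- `Z` is a Legendrian subvariety of the contact chart `(U, θ)`: an analytic subvariety
of `U` of pure dimension `m` (its `m`-dimensional nonsingular locus is dense in `Z`)
whose tangent spaces at nonsingular points are contained in `D = ker θ`. -/
def IsLegendrian (m : ℕ) (U : Set (Cn (2*m+1)))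
    (θ : Cn (2*m+1) → (Cn (2*m+1) →L[ℂ] ℂ)) (Z : Set (Cn (2*m+1))) : Prop :=
  IsAnSub U Z ∧
  (∀ x ∈ Z, x ∈ closure {y | SmoothPt (m+1) Z y}) ∧
  (∀ x, SmoothPt (m+1) Z x → ∀ v ∈ zTang Z x, θ x v = 0)

/-- `S` is a Legendrian submanifold of the contact chart `(U, θ)`. -/
def IsLegSubmanifold (m : ℕ) (U : Set (Cn (2*m+1)))
    (θ : Cn (2*m+1) → (Cn (2*m+1) →L[ℂ] ℂ)) (S : Set (Cn (2*m+1))) : Prop :=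
  S ⊆ U ∧ ∀ x ∈ S, SmoothPt (m+1) S x ∧ ∀ v ∈ zTang S x, θ x v = 0

/-! ## Cones, Lagrangian cones, tangent cones -/

/-- The embedding `ℂ^{2m} ↪ ℂ^{2m+1}` as the hyperplane `{x_{2m+1} = 0}`. -/
def embedH (m : ℕ) (y : Cn (2*m)) : Cn (2*m+1) :=
  fun j => if h : (j : ℕ) < 2*m then y ⟨j, h⟩ else 0

/-- Projection `ℂ^{2m+1} → ℂ^{2m}` forgetting the last coordinate. -/
def prE (m : ℕ) (x : Cn (2*m+1)) : Cn (2*m) :=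
  fun i => x ⟨i, by have := i.isLt; omega⟩

/-- `Y ⊆ ℂ^{2m}` is a Lagrangian cone for the symplectic form `ω = dθ|_{ℂ^{2m}}`:
a reduced affine cone (the zero set of a homogeneous ideal of polynomials) of pure
dimension `m` on whose nonsingular locus `ω` vanishes. -/
def IsLagrangianCone (m : ℕ) (Y : Set (Cn (2*m))) : Prop :=
  (∃ S : Set (MvPolynomial (Fin (2*m)) ℂ),
    (∀ P ∈ S, ∃ d, MvPolynomial.IsHomogeneous P d) ∧
    Y = {y : Cn (2*m) | ∀ P ∈ S, MvPolynomial.eval y P = 0}) ∧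
  (∀ x ∈ Y, x ∈ closure {y | SmoothPt m Y y}) ∧
  (∀ x, SmoothPt m Y x → ∀ u ∈ zTang Y x, ∀ v ∈ zTang Y x, omS m u v = 0)

/-- The Legendrian germ `x ∈ Z ⊆ (U, θ)` is a Lagrangian cone singularity: it is
contactomorphic to the germ at `0` of a Lagrangian cone `Y ⊆ ℂ^{2m} ⊆ ℂ^{2m+1}`
regarded as a Legendrian subvariety of `(ℂ^{2m+1}, θ_{std})`. -/
def IsLagConeSing (m : ℕ) (U : Set (Cn (2*m+1)))
    (θ : Cn (2*m+1) → (Cn (2*m+1) →L[ℂ] ℂ))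
    (Z : Set (Cn (2*m+1))) (x : Cn (2*m+1)) : Prop :=
  ∃ Y : Set (Cn (2*m)), IsLagrangianCone m Y ∧
    GermContacto m U θ Z x Set.univ (thC m) (embedH m '' Y) 0

/-- Generators of the tangent cone ideal of `Z` at `x`: homogeneous polynomials which
are the lowest-order terms of Taylor expansions at `x` of holomorphic germs vanishing
on `Z`. -/
def TCgens (n : ℕ) (Z : Set (Cn n)) (x : Cn n) : Set (MvPolynomial (Fin n) ℂ) :=
  {P | ∃ (V : Set (Cn n)) (f : Cn n → ℂ) (d : ℕ),
    IsOpen V ∧ x ∈ V ∧ AnalyticOnNhd ℂ f V ∧ (∀ z ∈ Z ∩ V, f z = 0) ∧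
    (∀ k < d, iteratedFDeriv ℂ k f x = 0) ∧ iteratedFDeriv ℂ d f x ≠ 0 ∧
    MvPolynomial.IsHomogeneous P d ∧
    ∀ v : Cn n, MvPolynomial.eval v P
      = iteratedFDeriv ℂ d f x (fun _ => v) / (d.factorial : ℂ)}

/-- The ideal of the tangent cone `TC_{Z,x}` (a subscheme of `T_x ℂⁿ = ℂⁿ`). -/
noncomputable def TCideal (n : ℕ) (Z : Set (Cn n)) (x : Cn n) : Ideal (MvPolynomial (Fin n) ℂ) :=
  Ideal.span (TCgens n Z x)

/--  The underlying set of the tangent cone `TC_{Z,x} ⊆ T_x ℂⁿ = ℂⁿ`. -/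
def TCset (n : ℕ) (Z : Set (Cn n)) (x : Cn n) : Set (Cn n) :=
  {v | ∀ P ∈ TCideal n Z x, MvPolynomial.eval v P = 0}

/-- Membership in the saturation of a homogeneous ideal `J` with respect to the
irrelevant ideal. -/
def memSat (n : ℕ) (J : Ideal (MvPolynomial (Fin n) ℂ)) (P : MvPolynomial (Fin n) ℂ) :
    Prop :=
  ∃ N : ℕ, ∀ Q ∈ (Ideal.span (Set.range (MvPolynomial.X : Fin n → MvPolynomial (Fin n) ℂ))) ^ N,
    Q * P ∈ J

/-- The projective scheme `Proj` of the homogeneous ideal `J` is reduced: the saturation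
of `J` is a radical ideal. -/
def ProjReduced (n : ℕ) (J : Ideal (MvPolynomial (Fin n) ℂ)) : Prop :=
  ∀ (P : MvPolynomial (Fin n) ℂ) (k : ℕ), k ≠ 0 → memSat n J (P ^ k) → memSat n J P

/-- The linear vector field `ω†(q) = ∑ (∂q/∂y_{m+k} ∂/∂y_k − ∂q/∂y_k ∂/∂y_{m+k})`
associated to a homogeneous quadratic polynomial `q` on the symplectic vector space
`ℂ^{2m}` (Proposition 3.12 of the paper);  `∂q/∂y_j(x) = polar q (x, e_j)`. -/
noncomputable def omDag (m : ℕ) (Q : QuadraticForm ℂ (Cn (2*m))) (x : Cn (2*m)) :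
    Cn (2*m) :=
  fun j =>
    if h : (j : ℕ) < m then
      QuadraticMap.polar (⇑Q) x (Pi.single (hi2 m ⟨j, h⟩) 1)
    else
      - QuadraticMap.polar (⇑Q) x (Pi.single (lo2 m ⟨(j : ℕ) - m, by have := j.isLt; omega⟩) 1)

/-! ## Time-dependent vector fields, flows, infinitesimal contactomorphisms -/

/-- `A` is an infinitesimal contactomorphism of the contact chart `(U, θ)`: a holomorphic
vector field whose (local) flows preserve `D = ker θ`; equivalently `L_A θ = g·θ`. -/
def IsInfCont (m : ℕ) (U : Set (Cn (2*m+1)))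
    (θ : Cn (2*m+1) → (Cn (2*m+1) →L[ℂ] ℂ)) (A : Cn (2*m+1) → Cn (2*m+1)) : Prop :=
  AnalyticOnNhd ℂ A U ∧ ∃ g : Cn (2*m+1) → ℂ, AnalyticOnNhd ℂ g U ∧
    ∀ x ∈ U, LieD A θ x = g x • θ x

/-- `Ψ` satisfies properties (a), (b), (c) of Lemma 5.4 for the time-dependent
holomorphic vector field `B` on `U × Δ` (with `dπ^Δ(B) = 0`):  it commutes with the
projection to `Δ` (built into the encoding), restricts to the identity at `t = 0`,
and `dΨ(∂/∂t) = B + ∂/∂t`. -/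
def IsFlowABC (n : ℕ) (U : Set (Cn n)) (Δ : Set ℂ) (B : Cn n × ℂ → Cn n)
    (Uz : Set (Cn n)) (Δz : Set ℂ) (Ψ : Cn n × ℂ → Cn n) : Prop :=
  IsOpen Uz ∧ IsOpen Δz ∧ (0 : ℂ) ∈ Δz ∧ Uz ⊆ U ∧ Δz ⊆ Δ ∧
  AnalyticOnNhd ℂ Ψ (Uz ×ˢ Δz) ∧ (∀ p ∈ Uz ×ˢ Δz, Ψ p ∈ U) ∧
  (∀ w ∈ Uz, Ψ (w, 0) = w) ∧
  (∀ p ∈ Uz ×ˢ Δz, HasDerivAt (fun s => Ψ (p.1, s)) (B (Ψ p, p.2)) p.2)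

/-- The map `(w,t) ↦ (Ψ(w,t), t)` is biholomorphic onto its image. -/
def FlowBihol (n : ℕ) (Uz : Set (Cn n)) (Δz : Set ℂ) (Ψ : Cn n × ℂ → Cn n) : Prop :=
  IsOpen ((fun p : Cn n × ℂ => (Ψ p, p.2)) '' (Uz ×ˢ Δz)) ∧
  ∃ Θ : Cn n × ℂ → Cn n,
    AnalyticOnNhd ℂ Θ ((fun p : Cn n × ℂ => (Ψ p, p.2)) '' (Uz ×ˢ Δz)) ∧
    ∀ p ∈ Uz ×ˢ Δz, Θ (Ψ p, p.2) = p.1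

/-- `φ` maps `V` contactomorphically onto its image inside the contact chart `(U, θ)`. -/
def ContactoOntoImage (m : ℕ) (U : Set (Cn (2*m+1)))
    (θ : Cn (2*m+1) → (Cn (2*m+1) →L[ℂ] ℂ))
    (V : Set (Cn (2*m+1))) (φ : Cn (2*m+1) → Cn (2*m+1)) : Prop :=
  IsOpen (φ '' V) ∧ φ '' V ⊆ U ∧
  ∃ ψ : Cn (2*m+1) → Cn (2*m+1), IsContactoOn m V (φ '' V) θ θ φ ψ

/-- The local contact flow `Ψ^B` of a time-dependent infinitesimal contactomorphism `B`
at a point `z` (Lemma 5.4 of the paper): properties (a)–(c), biholomorphic onto its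
image, and each time-`t` map is contactomorphic onto its image. -/
def IsLocalContactFlow (m : ℕ) (U : Set (Cn (2*m+1)))
    (θ : Cn (2*m+1) → (Cn (2*m+1) →L[ℂ] ℂ)) (Δ : Set ℂ)
    (B : Cn (2*m+1) × ℂ → Cn (2*m+1)) (z : Cn (2*m+1))
    (Uz : Set (Cn (2*m+1))) (Δz : Set ℂ) (Ψ : Cn (2*m+1) × ℂ → Cn (2*m+1)) : Prop :=
  z ∈ Uz ∧ IsFlowABC (2*m+1) U Δ B Uz Δz Ψ ∧ FlowBihol (2*m+1) Uz Δz Ψ ∧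
  ∀ t ∈ Δz, ContactoOntoImage m U θ Uz (fun w => Ψ (w, t))

section Helpers

open Finset

variable {m : ℕ}

lemma lo_val (i : Fin m) : ((lo m i : Fin (2*m+1)) : ℕ) = i := rfl
lemma hi_val (i : Fin m) : ((hi m i : Fin (2*m+1)) : ℕ) = m + i := rfl
lemma lst_val : ((lst m : Fin (2*m+1)) : ℕ) = 2*m := rfl

lemma lo_ne_lst (i : Fin m) : lo m i ≠ lst m := by
  have := i.isLt; simp [lo, lst, Fin.ext_iff]; omega

lemma hi_ne_lst (i : Fin m) : hi m i ≠ lst m := by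
  have := i.isLt; simp [hi, lst, Fin.ext_iff]; omega

lemma lo_ne_hi (i j : Fin m) : lo m i ≠ hi m j := by
  have := i.isLt; simp [lo, hi, Fin.ext_iff]; omega

lemma lo_inj {i j : Fin m} (h : lo m i = lo m j) : i = j := by
  simpa [lo, Fin.ext_iff] using h

lemma hi_inj {i j : Fin m} (h : hi m i = hi m j) : i = j := by
  have := Fin.ext_iff.1 h
  simp only [hi_val] at this
  exact Fin.ext (by omega)

lemma index_cases (j : Fin (2*m+1)) :
    (∃ i, j = lo m i) ∨ (∃ i, j = hi m i) ∨ j = lst m := by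
  have hj := j.isLt
  rcases lt_or_ge (j : ℕ) m with h | h
  · exact Or.inl ⟨⟨j, h⟩, Fin.ext rfl⟩
  · rcases lt_or_ge (j : ℕ) (2*m) with h2 | h2
    · exact Or.inr (Or.inl ⟨⟨(j : ℕ) - m, by omega⟩, Fin.ext (by simp [hi]; omega)⟩)
    · exact Or.inr (Or.inr (Fin.ext (by simp [lst]; omega)))

lemma sum_split {M : Type*} [AddCommMonoid M] (F : Fin (2*m+1) → M) :
    ∑ j, F j = (∑ i : Fin m, F (lo m i)) + (∑ i : Fin m, F (hi m i)) + F (lst m) := by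
  have h : 2*m+1 = m + (m+1) := by omega
  have key : ∑ j : Fin (m+(m+1)), F (finCongr h.symm j) = ∑ j, F j :=
    Fintype.sum_equiv (finCongr h.symm) _ F (fun _ => rfl)
  rw [← key, Fin.sum_univ_add, Fin.sum_univ_castSucc]
  have h1 : ∀ i : Fin m, finCongr h.symm (Fin.castAdd (m+1) i) = lo m i :=
    fun i => Fin.ext (by simp [lo])
  have h2 : ∀ i : Fin m, finCongr h.symm (Fin.natAdd m i.castSucc) = hi m i :=
    fun i => Fin.ext (by simp [hi])
  have h3 : finCongr h.symm (Fin.natAdd m (Fin.last m)) = lst m :=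
    Fin.ext (by simp [lst]; try omega)
  simp only [h1, h2, h3]
  abel

lemma clm_apply_eq_sum {n : ℕ} (φ : Cn n →L[ℂ] ℂ) (w : Cn n) :
    φ w = ∑ j, w j * φ (Pi.single j 1) := by
  have hw : w = ∑ j, w j • (Pi.single j (1:ℂ) : Cn n) := by
    funext k
    simp [Finset.sum_apply, Pi.single_apply]
  conv_lhs => rw [hw]
  rw [map_sum]
  exact Finset.sum_congr rfl fun j _ => by rw [map_smul]; simp [smul_eq_mul]

lemma thC_apply (m : ℕ) (z w : Cn (2*m+1)) :
    thC m z w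
      = (∑ i : Fin m, (z (hi m i) * w (lo m i) - z (lo m i) * w (hi m i))) - w (lst m) := by
  simp [thC, ContinuousLinearMap.sum_apply, ContinuousLinearMap.sub_apply,
    ContinuousLinearMap.smul_apply, ContinuousLinearMap.proj_apply, smul_eq_mul]

lemma vf_lo (f : Cn (2*m+1) → ℂ) (x : Cn (2*m+1)) (i : Fin m) :
    vf m f x (lo m i) = (pd f (hi m i) x - pd f (lst m) x * x (lo m i)) / 2 := by
  have h : ((lo m i : Fin (2*m+1)) : ℕ) < m := i.isLt
  have hidx : (⟨((lo m i : Fin (2*m+1)) : ℕ), h⟩ : Fin m) = i := Fin.ext rfl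
  simp only [vf, dif_pos h, hidx]

lemma vf_hi (f : Cn (2*m+1) → ℂ) (x : Cn (2*m+1)) (i : Fin m) :
    vf m f x (hi m i) = (-(pd f (lo m i) x) - pd f (lst m) x * x (hi m i)) / 2 := by
  have hi1 : ¬ ((hi m i : Fin (2*m+1)) : ℕ) < m := by simp [hi_val]
  have hi2 : ((hi m i : Fin (2*m+1)) : ℕ) < 2*m := by have := i.isLt; simp [hi_val]; omega
  have hidx : (⟨((hi m i : Fin (2*m+1)) : ℕ) - m, by omega⟩ : Fin m) = i :=
    Fin.ext (by simp [hi_val])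
  simp only [vf, dif_neg hi1, dif_pos hi2, hidx]

lemma vf_lst (f : Cn (2*m+1) → ℂ) (x : Cn (2*m+1)) :
    vf m f x (lst m)
      = ((∑ i : Fin m, (pd f (lo m i) x * x (lo m i) + pd f (hi m i) x * x (hi m i)))
          - 2 * f x) / 2 := by
  have h1 : ¬ ((lst m : Fin (2*m+1)) : ℕ) < m := by simp [lst_val]; omega
  have h2 : ¬ ((lst m : Fin (2*m+1)) : ℕ) < 2*m := by simp [lst_val]
  simp only [vf, dif_neg h1, dif_neg h2]

end Helpers

section Comp

variable {m : ℕ}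

lemma thC_vf (f : Cn (2*m+1) → ℂ) (x : Cn (2*m+1)) (hfx : f x = 0) :
    thC m x (vf m f x) = 0 := by
  rw [thC_apply]
  have h1 : ∀ i : Fin m, x (hi m i) * vf m f x (lo m i) - x (lo m i) * vf m f x (hi m i)
      = (pd f (lo m i) x * x (lo m i) + pd f (hi m i) x * x (hi m i)) / 2 := by
    intro i; rw [vf_lo, vf_hi]; ring
  rw [Finset.sum_congr rfl (fun i _ => h1 i), vf_lst, hfx, ← Finset.sum_div]
  ring

lemma dthC_vf (f : Cn (2*m+1) → ℂ) (x : Cn (2*m+1)) (b : Cn (2*m+1))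
    (hθ : thC m x b = 0) (hdf : fderiv ℂ f x b = 0) :
    dthC m (vf m f x) b = 0 := by
  have hsum := clm_apply_eq_sum (fderiv ℂ f x) b
  rw [hdf, sum_split (fun j => b j * fderiv ℂ f x (Pi.single j 1))] at hsum
  rw [thC_apply] at hθ
  unfold dthC
  have h1 : ∀ i : Fin m,
      vf m f x (hi m i) * b (lo m i) - vf m f x (lo m i) * b (hi m i)
      = (-(b (lo m i) * pd f (lo m i) x) + -(b (hi m i) * pd f (hi m i) x)
          + -(pd f (lst m) x * (x (hi m i) * b (lo m i) - x (lo m i) * b (hi m i)))) / 2 := by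
    intro i; rw [vf_lo, vf_hi]; unfold pd; ring
  rw [Finset.sum_congr rfl (fun i _ => h1 i), ← Finset.sum_div, Finset.sum_add_distrib,
    Finset.sum_add_distrib, Finset.sum_neg_distrib, Finset.sum_neg_distrib,
    Finset.sum_neg_distrib, ← Finset.mul_sum]
  have e2 : ∑ i : Fin m, (x (hi m i) * b (lo m i) - x (lo m i) * b (hi m i)) = b (lst m) := by
    linear_combination hθ
  rw [e2]
  unfold pd
  linear_combination hsum

/-- nondegeneracy of dθ on ker θₓ -/
lemma dthC_nondeg (x u : Cn (2*m+1)) (hu : thC m x u = 0)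
    (h : ∀ w, thC m x w = 0 → dthC m u w = 0) : u = 0 := by
  have hall : ∀ w : Cn (2*m+1), dthC m u w = 0 := by
    intro w
    set w' : Cn (2*m+1) := Function.update w (lst m)
      (∑ i : Fin m, (x (hi m i) * w (lo m i) - x (lo m i) * w (hi m i))) with hw'
    have hlo : ∀ i : Fin m, w' (lo m i) = w (lo m i) := fun i =>
      Function.update_of_ne (lo_ne_lst i) _ _
    have hhi : ∀ i : Fin m, w' (hi m i) = w (hi m i) := fun i =>
      Function.update_of_ne (hi_ne_lst i) _ _
    have hw'θ : thC m x w' = 0 := by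
      rw [thC_apply]
      have : w' (lst m) = ∑ i : Fin m, (x (hi m i) * w (lo m i) - x (lo m i) * w (hi m i)) :=
        Function.update_self _ _ _
      rw [this, Finset.sum_congr rfl (fun i _ => by rw [hlo i, hhi i])]
      ring
    have := h w' hw'θ
    unfold dthC at this ⊢
    rwa [Finset.sum_congr rfl (fun i (_ : i ∈ Finset.univ) => by rw [hlo i, hhi i])] at this
  have hhi0 : ∀ k : Fin m, u (hi m k) = 0 := by
    intro k
    have := hall (Pi.single (lo m k) 1)
    unfold dthC at this
    have heval : ∀ i : Fin m,
        u (hi m i) * (Pi.single (lo m k) 1 : Cn (2*m+1)) (lo m i)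
          - u (lo m i) * (Pi.single (lo m k) 1 : Cn (2*m+1)) (hi m i)
        = if i = k then u (hi m i) else 0 := by
      intro i
      rw [Pi.single_apply, Pi.single_apply]
      rcases eq_or_ne i k with h | hik
      · rw [h]; simp [(lo_ne_hi k k).symm]
      · have h1 : lo m i ≠ lo m k := fun hc => hik (lo_inj hc)
        have h2 : hi m i ≠ lo m k := fun hc => (lo_ne_hi k i) hc.symm
        simp [h1, h2, hik]
    rw [Finset.sum_congr rfl (fun i _ => heval i), Finset.sum_ite_eq' _ k] at this
    simp at this
    exact this
  have hlo0 : ∀ k : Fin m, u (lo m k) = 0 := by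
    intro k
    have := hall (Pi.single (hi m k) 1)
    unfold dthC at this
    have heval : ∀ i : Fin m,
        u (hi m i) * (Pi.single (hi m k) 1 : Cn (2*m+1)) (lo m i)
          - u (lo m i) * (Pi.single (hi m k) 1 : Cn (2*m+1)) (hi m i)
        = if i = k then -(u (lo m i)) else 0 := by
      intro i
      rw [Pi.single_apply, Pi.single_apply]
      rcases eq_or_ne i k with h | hik
      · rw [h]; simp [lo_ne_hi k k]
      · have h1 : lo m i ≠ hi m k := lo_ne_hi i k
        have h2 : hi m i ≠ hi m k := fun hc => hik (hi_inj hc)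
        simp [h1, h2, hik]
    rw [Finset.sum_congr rfl (fun i _ => heval i), Finset.sum_ite_eq' _ k] at this
    simp at this
    exact this
  have hlst0 : u (lst m) = 0 := by
    rw [thC_apply] at hu
    have : ∀ i : Fin m, x (hi m i) * u (lo m i) - x (lo m i) * u (hi m i) = 0 := by
      intro i; rw [hlo0 i, hhi0 i]; ring
    rw [Finset.sum_congr rfl (fun i _ => this i)] at hu
    simpa using hu
  funext j
  rcases index_cases j with ⟨i, rfl⟩ | ⟨i, rfl⟩ | rfl
  · exact hlo0 i
  · exact hhi0 i
  · exact hlst0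

lemma dthC_skew (a b : Cn (2*m+1)) : dthC m a b = - dthC m b a := by
  unfold dthC
  have : ∀ i : Fin m, a (hi m i) * b (lo m i) - a (lo m i) * b (hi m i)
      = -(b (hi m i) * a (lo m i) - b (lo m i) * a (hi m i)) := fun i => by ring
  rw [Finset.sum_congr rfl fun i _ => this i, Finset.sum_neg_distrib]
  ring

/-- dθ as a bilinear form -/
noncomputable def dthB (m : ℕ) : LinearMap.BilinForm ℂ (Cn (2*m+1)) :=
  LinearMap.mk₂ ℂ (dthC m)
    (fun a a' b => by
      unfold dthC
      have : ∀ i : Fin m, ((a + a') (hi m i) * b (lo m i) - (a + a') (lo m i) * b (hi m i))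
          = (a (hi m i) * b (lo m i) - a (lo m i) * b (hi m i))
            + (a' (hi m i) * b (lo m i) - a' (lo m i) * b (hi m i)) := by
        intro i; simp [Pi.add_apply]; ring
      rw [Finset.sum_congr rfl fun i _ => this i, Finset.sum_add_distrib]; ring)
    (fun c a b => by
      unfold dthC
      have : ∀ i : Fin m, ((c • a) (hi m i) * b (lo m i) - (c • a) (lo m i) * b (hi m i))
          = c * (a (hi m i) * b (lo m i) - a (lo m i) * b (hi m i)) := by
        intro i; simp [Pi.smul_apply, smul_eq_mul]; ring
      rw [Finset.sum_congr rfl fun i _ => this i, ← Finset.mul_sum]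
      simp [smul_eq_mul]; ring)
    (fun a b b' => by
      unfold dthC
      have : ∀ i : Fin m, (a (hi m i) * (b + b') (lo m i) - a (lo m i) * (b + b') (hi m i))
          = (a (hi m i) * b (lo m i) - a (lo m i) * b (hi m i))
            + (a (hi m i) * b' (lo m i) - a (lo m i) * b' (hi m i)) := by
        intro i; simp [Pi.add_apply]; ring
      rw [Finset.sum_congr rfl fun i _ => this i, Finset.sum_add_distrib]; ring)
    (fun c a b => by
      unfold dthC
      have : ∀ i : Fin m, (a (hi m i) * (c • b) (lo m i) - a (lo m i) * (c • b) (hi m i))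
          = c * (a (hi m i) * b (lo m i) - a (lo m i) * b (hi m i)) := by
        intro i; simp [Pi.smul_apply, smul_eq_mul]; ring
      rw [Finset.sum_congr rfl fun i _ => this i, ← Finset.mul_sum]
      simp [smul_eq_mul]; ring)

@[simp] lemma dthB_apply (a b : Cn (2*m+1)) : dthB m a b = dthC m a b := rfl

end Comp

section LinAlg

open Module

lemma finrank_Cn (n : ℕ) : Module.finrank ℂ (Cn n) = n := Module.finrank_fin_fun ℂ

lemma thC_single_lst (m : ℕ) (x : Cn (2*m+1)) :
    thC m x (Pi.single (lst m) 1) = -1 := by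
  rw [thC_apply]
  have : ∀ i : Fin m, x (hi m i) * (Pi.single (lst m) 1 : Cn (2*m+1)) (lo m i)
      - x (lo m i) * (Pi.single (lst m) 1 : Cn (2*m+1)) (hi m i) = 0 := by
    intro i
    rw [Pi.single_apply, Pi.single_apply, if_neg (lo_ne_lst i), if_neg (hi_ne_lst i)]
    ring
  rw [Finset.sum_congr rfl fun i _ => this i, Pi.single_apply, if_pos rfl]
  simp

set_option synthInstance.maxHeartbeats 1000000 in
set_option maxHeartbeats 2000000 in
lemma lagrangian_mem (m : ℕ) (x : Cn (2*m+1)) (T : Submodule ℂ (Cn (2*m+1)))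
    (hdim : Module.finrank ℂ T = m)
    (hT : ∀ a ∈ T, thC m x a = 0)
    (hiso : ∀ a ∈ T, ∀ b ∈ T, dthC m a b = 0)
    (v : Cn (2*m+1)) (hv1 : thC m x v = 0) (hv2 : ∀ b ∈ T, dthC m v b = 0) :
    v ∈ T := by
  classical
  set θl : Cn (2*m+1) →ₗ[ℂ] ℂ := (thC m x : Cn (2*m+1) →L[ℂ] ℂ).toLinearMap with hθl
  set W : Submodule ℂ (Cn (2*m+1)) := LinearMap.ker θl with hW
  -- dimension of W
  have hsurj : Function.Surjective θl := by
    intro c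
    refine ⟨(-c) • (Pi.single (lst m) 1 : Cn (2*m+1)), ?_⟩
    have : θl (Pi.single (lst m) 1) = -1 := thC_single_lst m x
    rw [map_smul, this]
    simp
  have hrange : LinearMap.range θl = ⊤ := LinearMap.range_eq_top.2 hsurj
  have hWdim : Module.finrank ℂ W = 2*m := by
    have h1 := LinearMap.finrank_range_add_finrank_ker θl
    rw [hrange] at h1
    have h2 : Module.finrank ℂ (⊤ : Submodule ℂ ℂ) = 1 := by
      rw [finrank_top]; exact Module.finrank_self ℂ
    rw [h2, finrank_Cn] at h1
    rw [hW]
    omega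
  have hTW : T ≤ W := fun a ha => by
    simp only [hW, LinearMap.mem_ker]
    exact hT a ha
  set T' : Submodule ℂ W := T.comap W.subtype with hT'
  have hT'dim : Module.finrank ℂ T' = m := by
    rw [(Submodule.comapSubtypeEquivOfLe hTW).finrank_eq, hdim]
  -- the bilinear form on W
  set B : LinearMap.BilinForm ℂ W := (dthB m).restrict W with hB
  have hBapp : ∀ a b : W, B a b = dthC m (a : Cn (2*m+1)) (b : Cn (2*m+1)) := fun a b => rfl
  have hrefl : B.IsRefl := by
    intro a b hab
    rw [hBapp] at hab ⊢
    rw [dthC_skew, hab, neg_zero]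
  have hnd : B.Nondegenerate := by
    refine (LinearMap.IsRefl.nondegenerate_iff_separatingLeft hrefl).2 ?_
    intro a ha
    have : (a : Cn (2*m+1)) = 0 := by
      apply dthC_nondeg x a a.2
      intro w hw
      exact (hBapp a ⟨w, hw⟩).symm.trans (ha ⟨w, hw⟩)
    exact Subtype.ext this
  -- orthogonal complement
  have hT'O : T' ≤ B.orthogonal T' := by
    intro a ha
    rw [LinearMap.BilinForm.mem_orthogonal_iff]
    intro b hb
    rw [hBapp]
    exact hiso b (hb : (b : Cn (2*m+1)) ∈ T) a (ha : (a : Cn (2*m+1)) ∈ T)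
  have hOdim : Module.finrank ℂ (B.orthogonal T') = m := by
    rw [LinearMap.BilinForm.finrank_orthogonal hnd T', hWdim, hT'dim]
    omega
  have hEq : T' = B.orthogonal T' := by
    apply Submodule.eq_of_le_of_finrank_le hT'O
    rw [hOdim, hT'dim]
  have hvW : v ∈ W := by simp only [hW, LinearMap.mem_ker]; exact hv1
  have hvO : (⟨v, hvW⟩ : W) ∈ B.orthogonal T' := by
    rw [LinearMap.BilinForm.mem_orthogonal_iff]
    intro b hb
    rw [hBapp]
    rw [dthC_skew, hv2 b (hb : (b : Cn (2*m+1)) ∈ T), neg_zero]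
  rw [← hEq] at hvO
  exact hvO

end LinAlg

section KeyParam

open ContinuousLinearMap Filter

set_option maxHeartbeats 2000000 in
set_option synthInstance.maxHeartbeats 400000 in
lemma key_param (m : ℕ) (Z : Set (Cn (2*m+1)))
    (hLeg : ∀ z, SmoothPt (m+1) Z z → ∀ w ∈ zTang Z z, thC m z w = 0)
    (x : Cn (2*m+1)) (hxZ : x ∈ Z)
    (V : Set (Cn (2*m+1))) (g : Cn (2*m+1) → Cn (m+1))
    (hVopen : IsOpen V) (hxV : x ∈ V) (hg : AnalyticOnNhd ℂ g V)
    (hZV : Z ∩ V = {z | z ∈ V ∧ g z = 0})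
    (hsurj : Function.Surjective (fderiv ℂ g x)) :
    (∀ u : Cn (2*m+1), fderiv ℂ g x u = 0 → u ∈ zTang Z x) ∧
    (∀ a b : Cn (2*m+1), fderiv ℂ g x a = 0 → fderiv ℂ g x b = 0 → dthC m a b = 0) := by
  classical
  set L : Cn (2*m+1) →L[ℂ] Cn (m+1) := fderiv ℂ g x with hL
  have hgx : g x = 0 := by
    have hmem : x ∈ Z ∩ V := ⟨hxZ, hxV⟩
    rw [hZV] at hmem
    exact hmem.2
  -- kernel of L and a complement-projection P
  set K : Submodule ℂ (Cn (2*m+1)) := LinearMap.ker (L : Cn (2*m+1) →ₗ[ℂ] Cn (m+1)) with hK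
  have hrange : LinearMap.range (L : Cn (2*m+1) →ₗ[ℂ] Cn (m+1)) = ⊤ :=
    LinearMap.range_eq_top.2 hsurj
  have hKdim : Module.finrank ℂ K = m := by
    have h1 := LinearMap.finrank_range_add_finrank_ker (L : Cn (2*m+1) →ₗ[ℂ] Cn (m+1))
    rw [hrange, finrank_top, finrank_Cn, finrank_Cn] at h1
    have h2 : LinearMap.ker (L : Cn (2*m+1) →ₗ[ℂ] Cn (m+1)) = K := rfl
    rw [h2] at h1
    omega
  obtain ⟨K', hcompl⟩ := Submodule.exists_isCompl K
  set π : Cn (2*m+1) →ₗ[ℂ] K := K.linearProjOfIsCompl K' hcompl with hπ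
  have eK : (K : Type) ≃ₗ[ℂ] Cn m := LinearEquiv.ofFinrankEq _ _ (by rw [hKdim, finrank_Cn])
  set Pc : Cn (2*m+1) →L[ℂ] Cn m :=
    LinearMap.toContinuousLinearMap ((eK : K →ₗ[ℂ] Cn m) ∘ₗ π) with hPc
  have hPcK : ∀ u (hu : u ∈ K), Pc u = eK ⟨u, hu⟩ := by
    intro u hu
    show eK (π u) = eK ⟨u, hu⟩
    rw [hπ]
    exact congrArg eK (Submodule.linearProjOfIsCompl_apply_left hcompl ⟨u, hu⟩)
  -- the local diffeo G
  set G : Cn (2*m+1) → Cn (m+1) × Cn m := fun z => (g z, Pc (z - x)) with hG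
  set lp : Cn (2*m+1) →L[ℂ] Cn (m+1) × Cn m := L.prod Pc with hlp
  have hinj : Function.Injective lp := by
    intro a b hab
    have h0 : lp (a - b) = 0 := by rw [map_sub, hab, sub_self]
    have hL0 : L (a - b) = 0 := congrArg Prod.fst h0
    have hP0 : Pc (a - b) = 0 := congrArg Prod.snd h0
    have hmem : a - b ∈ K := hL0
    rw [hPcK _ hmem] at hP0
    have : (⟨a - b, hmem⟩ : K) = 0 := by
      apply eK.injective
      rw [hP0, map_zero]
    have : a - b = 0 := congrArg Subtype.val this
    exact sub_eq_zero.mp this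
  have hbij : Function.Bijective lp := by
    refine ⟨hinj, ?_⟩
    have hfr : Module.finrank ℂ (Cn (2*m+1)) = Module.finrank ℂ (Cn (m+1) × Cn m) := by
      rw [finrank_Cn, Module.finrank_prod, finrank_Cn, finrank_Cn]
      omega
    exact ((LinearMap.injective_iff_surjective_of_finrank_eq_finrank hfr).1 hinj :
      Function.Surjective (lp : Cn (2*m+1) →ₗ[ℂ] Cn (m+1) × Cn m))
  set dGE : Cn (2*m+1) ≃L[ℂ] Cn (m+1) × Cn m :=
    (LinearEquiv.ofBijective (lp : Cn (2*m+1) →ₗ[ℂ] Cn (m+1) × Cn m) hbij).toContinuousLinearEquiv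
    with hdGE
  have hcoe : (dGE : Cn (2*m+1) →L[ℂ] Cn (m+1) × Cn m) = lp := by
    refine ContinuousLinearMap.ext fun u => ?_
    show dGE u = lp u
    rw [hdGE]
    show (LinearEquiv.ofBijective (lp : Cn (2*m+1) →ₗ[ℂ] Cn (m+1) × Cn m)
      hbij).toContinuousLinearEquiv u = lp u
    rw [LinearEquiv.coe_toContinuousLinearEquiv']
    rfl
  have hgd : HasFDerivAt g L x := (hg x hxV).differentiableAt.hasFDerivAt
  have hPd : HasFDerivAt (fun z : Cn (2*m+1) => Pc (z - x)) Pc x := by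
    simpa using Pc.hasFDerivAt.comp x ((hasFDerivAt_id x).sub_const x)
  have hGd : HasFDerivAt G lp x := hgd.prodMk hPd
  have hG' : HasFDerivAt G (dGE : Cn (2*m+1) →L[ℂ] Cn (m+1) × Cn m) x := by
    rw [hcoe]; exact hGd
  have hGc : ContDiffAt ℂ (⊤ : WithTop ℕ∞) G x := by
    apply ContDiffAt.prodMk
    · exact (hg x hxV).contDiffAt
    · exact (Pc.contDiff.comp (contDiff_id.sub contDiff_const)).contDiffAt
  have hGx : G x = (0, 0) := by
    simp [hG, hgx]
  -- the local inverse and the parametrization ι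
  set Φ : Cn (m+1) × Cn m → Cn (2*m+1) := hGc.localInverse hG' (by simp) with hΦ
  have hΦx : Φ (G x) = x := hGc.localInverse_apply_image hG' (by simp)
  have hΦct : ContDiffAt ℂ (⊤ : WithTop ℕ∞) Φ (G x) := hGc.to_localInverse hG' (by simp)
  have hΦan : AnalyticAt ℂ Φ (G x) := hΦct.analyticAt
  have hrinv : ∀ᶠ p in nhds (G x), G (Φ p) = p :=
    (hGc.hasStrictFDerivAt' hG' (by simp)).eventually_right_inverse
  set emb : Cn m → Cn (m+1) × Cn m := fun y => ((0 : Cn (m+1)), y) with hemb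
  have hembc : Continuous emb := continuous_const.prodMk continuous_id
  have hemban : AnalyticAt ℂ emb 0 := analyticAt_const.prod analyticAt_id
  set ι : Cn m → Cn (2*m+1) := fun y => Φ (emb y) with hι
  have hembx : emb 0 = G x := by rw [hGx]
  have hι0 : ι 0 = x := by rw [hι]; show Φ (emb 0) = x; rw [hembx, hΦx]
  have hιan : AnalyticAt ℂ ι 0 := by
    apply AnalyticAt.comp
    · rw [hembx]; exact hΦan
    · exact hemban
  -- right inverse of L
  obtain ⟨Rl, hRl⟩ := (L : Cn (2*m+1) →ₗ[ℂ] Cn (m+1)).exists_rightInverse_of_surjective hrange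
  set R : Cn (m+1) →L[ℂ] Cn (2*m+1) := LinearMap.toContinuousLinearMap Rl with hR
  have hLR : ∀ w, L (R w) = w := by
    intro w
    exact DFunLike.congr_fun hRl w
  -- eventual properties near 0
  have htend : Tendsto emb (nhds 0) (nhds (G x)) := by
    rw [← hembx]
    exact hembc.tendsto 0
  have hev1 : ∀ᶠ y in nhds (0 : Cn m), G (ι y) = emb y := htend.eventually hrinv
  have hev2 : ∀ᶠ y in nhds (0 : Cn m), ι y ∈ V := by
    have hc : ContinuousAt ι 0 := hιan.continuousAt
    apply hc.eventually_mem
    rw [hι0]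
    exact hVopen.mem_nhds hxV
  have hev3 : ∀ᶠ y in nhds (0 : Cn m), AnalyticAt ℂ ι y := by
    obtain ⟨s, hs, hsan⟩ := hιan.exists_mem_nhds_analyticOnNhd
    exact eventually_of_mem hs fun y hy => hsan y hy
  have hev4 : ∀ᶠ y in nhds (0 : Cn m), IsUnit ((fderiv ℂ g (ι y)).comp R) := by
    have hcont : ContinuousAt (fun y => (fderiv ℂ g (ι y)).comp R) 0 := by
      have h1 : ContinuousAt (fderiv ℂ g) x := ((hg.fderiv) x hxV).continuousAt
      have h2 : ContinuousAt (fun y => fderiv ℂ g (ι y)) 0 := by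
        rw [← hι0] at h1
        exact h1.comp hιan.continuousAt
      have h3 : Continuous (fun M : Cn (2*m+1) →L[ℂ] Cn (m+1) => M.comp R) :=
        ((ContinuousLinearMap.compSL (Cn (m+1)) (Cn (2*m+1)) (Cn (m+1))
          (RingHom.id ℂ) (RingHom.id ℂ)).flip R).continuous
      exact h3.continuousAt.comp h2
    have hval : (fderiv ℂ g (ι 0)).comp R = ContinuousLinearMap.id ℂ (Cn (m+1)) := by
      rw [hι0]
      refine ContinuousLinearMap.ext fun w => ?_
      exact hLR w
    have hmem : {M : Cn (m+1) →L[ℂ] Cn (m+1) | IsUnit M}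
        ∈ nhds ((fderiv ℂ g (ι 0)).comp R) := by
      rw [hval]
      exact Units.isOpen.mem_nhds isUnit_one
    filter_upwards [hcont.eventually_mem hmem] with y hy
    exact hy
  obtain ⟨N, hNprop, hNopen, h0N⟩ :=
    eventually_nhds_iff.mp ((hev1.and hev2).and (hev3.and hev4))
  have hP1 : ∀ y ∈ N, g (ι y) = 0 := fun y hy => congrArg Prod.fst ((hNprop y hy).1.1)
  have hP2 : ∀ y ∈ N, Pc (ι y - x) = y := fun y hy => congrArg Prod.snd ((hNprop y hy).1.1)
  have hP3 : ∀ y ∈ N, ι y ∈ V := fun y hy => (hNprop y hy).1.2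
  have hP4 : ∀ y ∈ N, AnalyticAt ℂ ι y := fun y hy => (hNprop y hy).2.1
  have hP5 : ∀ y ∈ N, Function.Surjective (fderiv ℂ g (ι y)) := by
    intro y hy w
    obtain ⟨u, hu⟩ := (hNprop y hy).2.2
    refine ⟨R ((↑u⁻¹ : Cn (m+1) →L[ℂ] Cn (m+1)) w), ?_⟩
    have := congrArg (fun M : Cn (m+1) →L[ℂ] Cn (m+1) => M w) (u.mul_inv)
    rw [hu] at this
    exact this
  have hZmem : ∀ y ∈ N, ι y ∈ Z ∩ V := by
    intro y hy
    rw [hZV]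
    exact ⟨hP3 y hy, hP1 y hy⟩
  have hSm : ∀ y ∈ N, SmoothPt (m+1) Z (ι y) := fun y hy =>
    ⟨(hZmem y hy).1, V, g, hVopen, hP3 y hy, hg, hZV, hP5 y hy⟩
  -- tangency of the image of dι
  have htangent : ∀ y ∈ N, ∀ u : Cn m, fderiv ℂ ι y u ∈ zTang Z (ι y) := by
    intro y hy u V₁ h₁ hV₁open hmemV₁ h₁an h₁vanish
    have hcι : ContinuousAt ι y := (hP4 y hy).continuousAt
    have hevz : (fun y' => h₁ (ι y')) =ᶠ[nhds y] fun _ => (0 : ℂ) := by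
      have hm1 : ∀ᶠ y' in nhds y, y' ∈ N := hNopen.mem_nhds hy
      have hm2 : ∀ᶠ y' in nhds y, ι y' ∈ V₁ := hcι.eventually_mem (hV₁open.mem_nhds hmemV₁)
      filter_upwards [hm1, hm2] with y' h1' h2'
      exact h₁vanish (ι y') ⟨(hZmem y' h1').1, h2'⟩
    have hd0 : fderiv ℂ (fun y' => h₁ (ι y')) y = 0 := by
      rw [hevz.fderiv_eq]
      exact fderiv_const_apply 0
    have hchain : fderiv ℂ (fun y' => h₁ (ι y')) y
        = (fderiv ℂ h₁ (ι y)).comp (fderiv ℂ ι y) :=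
      fderiv_comp y (h₁an (ι y) hmemV₁).differentiableAt (hP4 y hy).differentiableAt
    have := hchain.symm.trans hd0
    calc fderiv ℂ h₁ (ι y) (fderiv ℂ ι y u)
        = ((fderiv ℂ h₁ (ι y)).comp (fderiv ℂ ι y)) u := rfl
      _ = 0 := by rw [this]; rfl
  -- derivative identities for ι
  set dι0 : Cn m →L[ℂ] Cn (2*m+1) := fderiv ℂ ι 0 with hdι0
  have hdιdiff : ∀ y ∈ N, DifferentiableAt ℂ ι y := fun y hy => (hP4 y hy).differentiableAt
  have hPdι : Pc.comp dι0 = ContinuousLinearMap.id ℂ (Cn m) := by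
    have hevP : (fun y => Pc (ι y - x)) =ᶠ[nhds 0] id := by
      filter_upwards [hNopen.mem_nhds h0N] with y hy
      exact hP2 y hy
    have h1 : fderiv ℂ (fun y => Pc (ι y - x)) 0 = fderiv ℂ (id : Cn m → Cn m) 0 :=
      hevP.fderiv_eq
    rw [fderiv_id] at h1
    have h2 : HasFDerivAt (fun y => Pc (ι y - x)) (Pc.comp dι0) 0 :=
      Pc.hasFDerivAt.comp 0 ((hdιdiff 0 h0N).hasFDerivAt.sub_const x)
    rw [← h2.fderiv]
    exact h1
  have hLdι : L.comp dι0 = 0 := by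
    have hevg : (fun y => g (ι y)) =ᶠ[nhds 0] fun _ => (0 : Cn (m+1)) := by
      filter_upwards [hNopen.mem_nhds h0N] with y hy
      exact hP1 y hy
    have h1 : fderiv ℂ (fun y => g (ι y)) 0 = 0 := by
      rw [hevg.fderiv_eq]
      exact fderiv_const_apply 0
    have hgι0 : HasFDerivAt g L (ι 0) := by rw [hι0]; exact hgd
    have h2 : HasFDerivAt (fun y => g (ι y)) (L.comp dι0) 0 :=
      hgι0.comp 0 (hdιdiff 0 h0N).hasFDerivAt
    rw [← h2.fderiv]
    exact h1
  have hdι0inj : Function.Injective dι0 := by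
    intro a b hab
    have := congrArg Pc hab
    have ha : Pc (dι0 a) = a := DFunLike.congr_fun hPdι a
    have hb : Pc (dι0 b) = b := DFunLike.congr_fun hPdι b
    rw [ha, hb] at this
    exact this
  -- every kernel vector is in the range of dι0
  have hker_ran : ∀ u : Cn (2*m+1), L u = 0 → ∃ a : Cn m, dι0 a = u := by
    have hle : LinearMap.range (dι0 : Cn m →ₗ[ℂ] Cn (2*m+1)) ≤ K := by
      rintro _ ⟨a, rfl⟩
      show L (dι0 a) = 0
      have := DFunLike.congr_fun hLdι a
      exact this
    have hrdim : Module.finrank ℂ (LinearMap.range (dι0 : Cn m →ₗ[ℂ] Cn (2*m+1))) = m := by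
      have h1 := LinearMap.finrank_range_add_finrank_ker (dι0 : Cn m →ₗ[ℂ] Cn (2*m+1))
      have h2 : LinearMap.ker (dι0 : Cn m →ₗ[ℂ] Cn (2*m+1)) = ⊥ :=
        LinearMap.ker_eq_bot.2 hdι0inj
      rw [h2, finrank_bot, finrank_Cn] at h1
      omega
    have heq : LinearMap.range (dι0 : Cn m →ₗ[ℂ] Cn (2*m+1)) = K := by
      apply Submodule.eq_of_le_of_finrank_le hle
      rw [hrdim, hKdim]
    intro u hu
    have : u ∈ LinearMap.range (dι0 : Cn m →ₗ[ℂ] Cn (2*m+1)) := by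
      rw [heq]
      exact hu
    obtain ⟨a, ha⟩ := this
    exact ⟨a, ha⟩
  constructor
  · intro u hu
    obtain ⟨a, ha⟩ := hker_ran u hu
    have := htangent 0 h0N a
    rw [hι0, ← hdι0] at this
    rw [← ha]
    exact this
  · -- isotropy via second derivatives
    have hιON : AnalyticOnNhd ℂ ι N := fun y hy => hP4 y hy
    have hι'an : AnalyticAt ℂ (fderiv ℂ ι) 0 := hιON.fderiv 0 h0N
    set Dι' : Cn m →L[ℂ] (Cn m →L[ℂ] Cn (2*m+1)) := fderiv ℂ (fderiv ℂ ι) 0 with hDι'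
    have hι'd : HasFDerivAt (fderiv ℂ ι) Dι' 0 := hι'an.differentiableAt.hasFDerivAt
    have hsymm : ∀ a b : Cn m, Dι' a b = Dι' b a := by
      have h := (hιan.contDiffAt (n := (⊤ : WithTop ℕ∞))).isSymmSndFDerivAt le_top
      exact h
    have key : ∀ u w : Cn m,
        (∑ i : Fin m,
          (x (hi m i) • (proj (lo m i) : Cn (2*m+1) →L[ℂ] ℂ).comp
              ((ContinuousLinearMap.apply ℂ (Cn (2*m+1)) u).comp Dι')
            + (dι0 u) (lo m i) • (proj (hi m i) : Cn (2*m+1) →L[ℂ] ℂ).comp dι0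
            - ((x (lo m i)) • (proj (hi m i) : Cn (2*m+1) →L[ℂ] ℂ).comp
                ((ContinuousLinearMap.apply ℂ (Cn (2*m+1)) u).comp Dι')
              + (dι0 u) (hi m i) • (proj (lo m i) : Cn (2*m+1) →L[ℂ] ℂ).comp dι0))
          - (proj (lst m) : Cn (2*m+1) →L[ℂ] ℂ).comp
              ((ContinuousLinearMap.apply ℂ (Cn (2*m+1)) u).comp Dι') : Cn m →L[ℂ] ℂ) = 0 := by
      intro u w
      set η : Cn m → Cn (2*m+1) := fun y => fderiv ℂ ι y u with hη
      set Dη : Cn m →L[ℂ] Cn (2*m+1) :=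
        (ContinuousLinearMap.apply ℂ (Cn (2*m+1)) u).comp Dι' with hDη
      have hηd : HasFDerivAt η Dη 0 :=
        (ContinuousLinearMap.apply ℂ (Cn (2*m+1)) u).hasFDerivAt.comp 0 hι'd
      have hι0' : HasFDerivAt ι dι0 0 := (hdιdiff 0 h0N).hasFDerivAt
      have hιc : ∀ j : Fin (2*m+1), HasFDerivAt (fun y => ι y j)
          ((proj j : Cn (2*m+1) →L[ℂ] ℂ).comp dι0) 0 :=
        fun j => (proj j : Cn (2*m+1) →L[ℂ] ℂ).hasFDerivAt.comp 0 hι0'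
      have hηc : ∀ j : Fin (2*m+1), HasFDerivAt (fun y => η y j)
          ((proj j : Cn (2*m+1) →L[ℂ] ℂ).comp Dη) 0 :=
        fun j => (proj j : Cn (2*m+1) →L[ℂ] ℂ).hasFDerivAt.comp 0 hηd
      set β : Cn m → ℂ := fun y =>
        (∑ i : Fin m, (ι y (hi m i) * η y (lo m i) - ι y (lo m i) * η y (hi m i)))
          - η y (lst m) with hβ
      have hβ0 : ∀ y ∈ N, β y = 0 := by
        intro y hy
        rw [hβ]
        show (∑ i : Fin m, (ι y (hi m i) * η y (lo m i) - ι y (lo m i) * η y (hi m i)))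
          - η y (lst m) = 0
        rw [← thC_apply]
        exact hLeg (ι y) (hSm y hy) (η y) (htangent y hy u)
      have hβev : β =ᶠ[nhds 0] fun _ => (0 : ℂ) := by
        filter_upwards [hNopen.mem_nhds h0N] with y hy
        exact hβ0 y hy
      have hβD : HasFDerivAt β
        ((∑ i : Fin m,
          ((ι 0 (hi m i)) • (proj (lo m i) : Cn (2*m+1) →L[ℂ] ℂ).comp Dη
            + (η 0 (lo m i)) • (proj (hi m i) : Cn (2*m+1) →L[ℂ] ℂ).comp dι0
            - ((ι 0 (lo m i)) • (proj (hi m i) : Cn (2*m+1) →L[ℂ] ℂ).comp Dη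
              + (η 0 (hi m i)) • (proj (lo m i) : Cn (2*m+1) →L[ℂ] ℂ).comp dι0)))
          - (proj (lst m) : Cn (2*m+1) →L[ℂ] ℂ).comp Dη) 0 := by
        apply HasFDerivAt.sub _ (hηc (lst m))
        apply HasFDerivAt.fun_sum
        intro i _
        exact ((hιc (hi m i)).mul (hηc (lo m i))).sub ((hιc (lo m i)).mul (hηc (hi m i)))
      have hβD0 : HasFDerivAt β (0 : Cn m →L[ℂ] ℂ) 0 := by
        rw [hβev.hasFDerivAt_iff]
        exact hasFDerivAt_const 0 0
      have hzero := hβD.unique hβD0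
      have hη00 : η 0 = dι0 u := rfl
      rw [hι0, hη00] at hzero
      exact hzero
    intro a b ha hb
    obtain ⟨a', ha'⟩ := hker_ran a ha
    obtain ⟨b', hb'⟩ := hker_ran b hb
    have h1 := congrArg (fun M : Cn m →L[ℂ] ℂ => M a') (key b' a')
    have h2 := congrArg (fun M : Cn m →L[ℂ] ℂ => M b') (key a' b')
    simp only [ContinuousLinearMap.sub_apply, ContinuousLinearMap.sum_apply,
      ContinuousLinearMap.add_apply, ContinuousLinearMap.smul_apply,
      ContinuousLinearMap.comp_apply, ContinuousLinearMap.proj_apply,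
      ContinuousLinearMap.apply_apply, ContinuousLinearMap.zero_apply, smul_eq_mul] at h1 h2
    rw [show Dι' b' a' = Dι' a' b' from hsymm b' a'] at h2
    rw [← ha', ← hb']
    unfold dthC
    have e : ∀ i : Fin m,
        dι0 a' (hi m i) * dι0 b' (lo m i) - dι0 a' (lo m i) * dι0 b' (hi m i)
        = ((x (hi m i) * (Dι' a' b') (lo m i) + dι0 b' (lo m i) * dι0 a' (hi m i)
            - (x (lo m i) * (Dι' a' b') (hi m i) + dι0 b' (hi m i) * dι0 a' (lo m i)))
          - (x (hi m i) * (Dι' a' b') (lo m i) + dι0 a' (lo m i) * dι0 b' (hi m i)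
            - (x (lo m i) * (Dι' a' b') (hi m i) + dι0 a' (hi m i) * dι0 b' (lo m i)))) / 2 := by
      intro i; ring
    rw [Finset.sum_congr rfl fun i _ => e i, ← Finset.sum_div, Finset.sum_sub_distrib]
    linear_combination h1 - h2
end KeyParam

set_option maxHeartbeats 1000000 in
/-- **Theorem 2.2 (vii).**
`v^f` is tangent to any Legendrian subvariety `Z ⊆ U` contained in the hypersurface
`F = {f = 0}` (tangent at every nonsingular point of `Z`). -/
theorem vf_tangent_to_legendrian_in_hypersurface
    (m : ℕ) (U : Set (Cn (2*m+1))) (hU : IsOpen U) (h0U : (0 : Cn (2*m+1)) ∈ U)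
    (f : Cn (2*m+1) → ℂ) (hf : AnalyticOnNhd ℂ f U)
    (Z : Set (Cn (2*m+1))) (hZ : IsLegendrian m U (thC m) Z)
    (hZF : ∀ z ∈ Z, f z = 0) :
    ∀ x, SmoothPt (m+1) Z x → vf m f x ∈ zTang Z x := by
  intro x hx
  obtain ⟨hxZ, V, g, hVopen, hxV, hg, hZV, hsurj⟩ := hx
  have hLeg : ∀ z, SmoothPt (m+1) Z z → ∀ w ∈ zTang Z z, thC m z w = 0 := hZ.2.2
  have hkey := key_param m Z hLeg x hxZ V g hVopen hxV hg hZV hsurj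
  have hxU : x ∈ U := hZ.1.1 hxZ
  set T : Submodule ℂ (Cn (2*m+1)) := LinearMap.ker ((fderiv ℂ g x : Cn (2*m+1) →L[ℂ] Cn (m+1)) : Cn (2*m+1) →ₗ[ℂ] Cn (m+1)) with hT
  have hTz : ∀ u ∈ T, u ∈ zTang Z x := fun u hu => hkey.1 u (LinearMap.mem_ker.1 hu)
  have hxSm : SmoothPt (m+1) Z x := ⟨hxZ, V, g, hVopen, hxV, hg, hZV, hsurj⟩
  have hzt_th : ∀ u ∈ T, thC m x u = 0 := fun u hu => hLeg x hxSm u (hTz u hu)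
  have hzt_df : ∀ u ∈ zTang Z x, fderiv ℂ f x u = 0 := fun u hu =>
    hu U f hU hxU hf (fun z hz => hZF z hz.1)
  have hdim : Module.finrank ℂ T = m := by
    have hrange : LinearMap.range ((fderiv ℂ g x : Cn (2*m+1) →L[ℂ] Cn (m+1))
        : Cn (2*m+1) →ₗ[ℂ] Cn (m+1)) = ⊤ := LinearMap.range_eq_top.2 hsurj
    have h1 := LinearMap.finrank_range_add_finrank_ker
      ((fderiv ℂ g x : Cn (2*m+1) →L[ℂ] Cn (m+1)) : Cn (2*m+1) →ₗ[ℂ] Cn (m+1))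
    rw [hrange, finrank_top, finrank_Cn, finrank_Cn] at h1
    have h2 : LinearMap.ker ((fderiv ℂ g x : Cn (2*m+1) →L[ℂ] Cn (m+1))
        : Cn (2*m+1) →ₗ[ℂ] Cn (m+1)) = T := rfl
    rw [h2] at h1
    omega
  have hfx : f x = 0 := hZF x hxZ
  have hvT : vf m f x ∈ T := by
    apply lagrangian_mem m x T hdim hzt_th
      (fun a ha b hb => hkey.2 a b (LinearMap.mem_ker.1 ha) (LinearMap.mem_ker.1 hb))
      (vf m f x) (thC_vf f x hfx)
    intro b hb
    exact dthC_vf f x b (hzt_th b hb) (hzt_df b (hTz b hb))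
  exact hTz _ hvT
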